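/- arXiv:2110.01899 — 2 statements merged into one kernel-verified Lean document; each statement's English description precedes it below -/
import Mathlib

section
/- Let Z be a standard Gaussian random variable and f : ℝ → ℝ continuously differentiable with E[f(Z)²] < ∞ and E[f'(Z)²] < ∞. Then Var(f(Z)) ≥ (E[f'(Z)])². In particular, for σ continuously differentiable and τ > 0, the coefficient d₀ = E[σ(√τ Z)²] − (E[σ(√τ Z)])² − τ(E[σ'(√τ Z)])² is nonnegative. -/
/-!
Stein's identity `E[(Z - μ) f(Z)] = v E[f'(Z)]` for `Z ~ N(μ, v)` is integration by parts against
the density `φ`, using `φ' = -((x - μ) / v) φ`; the boundary term vanishes because `f φ` and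
its derivative are integrable on `ℝ`. Hence `v E[f'(Z)] = Cov(Z, f(Z))`, and Cauchy–Schwarz gives
`v² E[f'(Z)]² ≤ Var Z · Var f(Z) = v Var f(Z)`. The bound for `d₀` is the case `v = 1` applied to
`z ↦ σ(√τ z)`, whose derivative is `√τ σ'(√τ z)`.
-/

open MeasureTheory ProbabilityTheory Real
open scoped NNReal InnerProductSpace

theorem sq_integral_mul_le_integral_sq_mul_integral_sq {Ω : Type*} {mΩ : MeasurableSpace Ω}
    {μ : Measure Ω} {X Y : Ω → ℝ} (hX : MemLp X 2 μ) (hY : MemLp Y 2 μ) :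
    (∫ ω, X ω * Y ω ∂μ) ^ 2 ≤ (∫ ω, X ω ^ 2 ∂μ) * ∫ ω, Y ω ^ 2 ∂μ := by
  have inner_toLp_eq {U V : Ω → ℝ} (hU : MemLp U 2 μ) (hV : MemLp V 2 μ) :
      ⟪hU.toLp U, hV.toLp V⟫_ℝ = ∫ ω, U ω * V ω ∂μ := by
    rw [L2.inner_def]
    refine integral_congr_ae ?_
    filter_upwards [hU.coeFn_toLp, hV.coeFn_toLp] with ω hUω hVω
    simp [hUω, hVω, mul_comm]
  simpa only [inner_toLp_eq, sq] using real_inner_mul_inner_self_le (hX.toLp X) (hY.toLp Y)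

theorem covariance_sq_le_variance_mul_variance {Ω : Type*} {mΩ : MeasurableSpace Ω}
    {μ : Measure Ω} [IsFiniteMeasure μ] {X Y : Ω → ℝ} (hX : MemLp X 2 μ) (hY : MemLp Y 2 μ) :
    cov[X, Y; μ] ^ 2 ≤ Var[X; μ] * Var[Y; μ] := by
  rw [covariance, variance_eq_integral hX.aemeasurable, variance_eq_integral hY.aemeasurable]
  exact sq_integral_mul_le_integral_sq_mul_integral_sq (hX.sub (memLp_const _))
    (hY.sub (memLp_const _))

theorem hasDerivAt_gaussianPDFReal (μ : ℝ) (v : ℝ≥0) (x : ℝ) :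
    HasDerivAt (gaussianPDFReal μ v) (-((x - μ) / v) * gaussianPDFReal μ v x) x := by
  have h := ((((hasDerivAt_id' x).sub_const μ).fun_pow 2).neg.div_const (2 * (v : ℝ))).exp.const_mul
    (√(2 * π * v))⁻¹
  rw [gaussianPDFReal_def]
  refine h.congr_deriv ?_
  simp only [Pi.neg_apply, Nat.cast_ofNat]
  ring

theorem integrable_gaussianReal_iff {μ : ℝ} {v : ℝ≥0} (hv : v ≠ 0) {f : ℝ → ℝ} :
    Integrable f (gaussianReal μ v) ↔ Integrable (fun x => gaussianPDFReal μ v x * f x) := by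
  rw [gaussianReal_of_var_ne_zero _ hv,
    integrable_withDensity_iff_integrable_smul' (measurable_gaussianPDF μ v)
      (ae_of_all _ fun _ => gaussianPDF_lt_top)]
  simp only [toReal_gaussianPDF, smul_eq_mul]

theorem integral_sub_mul_gaussianReal_eq_mul_integral_deriv {μ : ℝ} {v : ℝ≥0} (hv : v ≠ 0)
    {f : ℝ → ℝ} (hf : Differentiable ℝ f) (hf_int : Integrable f (gaussianReal μ v))
    (hf'_int : Integrable (deriv f) (gaussianReal μ v))
    (hxf_int : Integrable (fun x => (x - μ) * f x) (gaussianReal μ v)) :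
    ∫ x, (x - μ) * f x ∂gaussianReal μ v = v * ∫ x, deriv f x ∂gaussianReal μ v := by
  rw [integrable_gaussianReal_iff hv] at hf_int hf'_int hxf_int
  have hv' : (v : ℝ) ≠ 0 := NNReal.coe_ne_zero.mpr hv
  have ibp := integral_mul_deriv_eq_deriv_mul_of_integrable (u := f) (u' := deriv f)
    (v := gaussianPDFReal μ v) (v' := fun x => -((x - μ) / v) * gaussianPDFReal μ v x)
    (fun x _ => (hf x).hasDerivAt) (fun x _ => hasDerivAt_gaussianPDFReal μ v x)
    (by
      refine (hxf_int.const_mul (-(v : ℝ)⁻¹)).congr (ae_of_all _ fun x => ?_)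
      simp only [Pi.mul_apply]
      ring)
    (by simpa only [Pi.mul_def, mul_comm] using hf'_int)
    (by simpa only [Pi.mul_def, mul_comm] using hf_int)
  simp only [integral_gaussianReal_eq_integral_smul hv, smul_eq_mul]
  calc ∫ x, gaussianPDFReal μ v x * ((x - μ) * f x)
      = -v * ∫ x, f x * (-((x - μ) / v) * gaussianPDFReal μ v x) := by
        rw [← integral_const_mul]
        congr 1 with x
        field_simp
    _ = v * ∫ x, gaussianPDFReal μ v x * deriv f x := by
        simp only [ibp, mul_comm (deriv f _)]
        ring

theorem covariance_id_gaussianReal_eq_mul_integral_deriv {μ : ℝ} {v : ℝ≥0} (hv : v ≠ 0)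
    {f : ℝ → ℝ} (hf : Differentiable ℝ f) (hf2 : MemLp f 2 (gaussianReal μ v))
    (hf'_int : Integrable (deriv f) (gaussianReal μ v)) :
    cov[id, f; gaussianReal μ v] = v * ∫ x, deriv f x ∂gaussianReal μ v := by
  set m := ∫ x, f x ∂gaussianReal μ v
  have hcentered : MemLp (fun x => f x - m) 2 (gaussianReal μ v) := hf2.sub (memLp_const m)
  have hsub : MemLp (fun x => x - μ) 2 (gaussianReal μ v) :=
    (memLp_id_gaussianReal 2).sub (memLp_const μ)
  have hderiv : deriv (fun x => f x - m) = deriv f := funext fun _ => deriv_sub_const m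
  have stein := integral_sub_mul_gaussianReal_eq_mul_integral_deriv hv (hf.sub_const m)
    (hcentered.integrable one_le_two) (hderiv ▸ hf'_int) (hsub.integrable_mul hcentered)
  simpa only [covariance, id, integral_id_gaussianReal, hderiv] using stein

theorem mul_sq_integral_deriv_le_variance_gaussianReal {μ : ℝ} {v : ℝ≥0}
    {f : ℝ → ℝ} (hf : Differentiable ℝ f) (hf2 : MemLp f 2 (gaussianReal μ v))
    (hf'2 : MemLp (deriv f) 2 (gaussianReal μ v)) :
    v * (∫ x, deriv f x ∂gaussianReal μ v) ^ 2 ≤ Var[f; gaussianReal μ v] := by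
  rcases eq_or_ne v 0 with rfl | hv
  · simpa only [NNReal.coe_zero, zero_mul] using variance_nonneg f _
  have hcs := covariance_sq_le_variance_mul_variance (memLp_id_gaussianReal 2) hf2
  rw [covariance_id_gaussianReal_eq_mul_integral_deriv hv hf hf2 (hf'2.integrable one_le_two),
    variance_id_gaussianReal, mul_pow, sq (v : ℝ), mul_assoc] at hcs
  exact le_of_mul_le_mul_left hcs (by positivity)

theorem memLp_two_of_integrable_sq {α : Type*} {mα : MeasurableSpace α} {μ : Measure α}
    {f : α → ℝ} (hf : Measurable f)
    (hf2 : Integrable (fun x => f x ^ 2) μ) : MemLp f 2 μ :=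
  (memLp_two_iff_integrable_sq hf.aestronglyMeasurable).mpr hf2

theorem gaussian_variance_lower_bound_general (f : ℝ → ℝ) (hf : ContDiff ℝ 1 f)
    (hf2 : Integrable (fun z => (f z) ^ 2) (gaussianReal 0 1))
    (hf'2 : Integrable (fun z => (deriv f z) ^ 2) (gaussianReal 0 1))
    (σ : ℝ → ℝ) (hσ : ContDiff ℝ 1 σ) (τ : ℝ)
    (hσ2 : Integrable (fun z => (σ (Real.sqrt τ * z)) ^ 2) (gaussianReal 0 1))
    (hσ'2 : Integrable (fun z => (deriv σ (Real.sqrt τ * z)) ^ 2) (gaussianReal 0 1)) :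
    variance f (gaussianReal 0 1) ≥ (∫ z, deriv f z ∂(gaussianReal 0 1)) ^ 2 ∧
    0 ≤ (∫ z, (σ (Real.sqrt τ * z)) ^ 2 ∂(gaussianReal 0 1))
        - (∫ z, σ (Real.sqrt τ * z) ∂(gaussianReal 0 1)) ^ 2
        - τ * (∫ z, deriv σ (Real.sqrt τ * z) ∂(gaussianReal 0 1)) ^ 2 := by
  have chernoff {g : ℝ → ℝ} (hg : ContDiff ℝ 1 g)
      (hg2 : MemLp g 2 (gaussianReal 0 1)) (hg'2 : MemLp (deriv g) 2 (gaussianReal 0 1)) :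
      (∫ z, deriv g z ∂(gaussianReal 0 1)) ^ 2 ≤ Var[g; gaussianReal 0 1] := by
    simpa only [NNReal.coe_one, one_mul] using
      mul_sq_integral_deriv_le_variance_gaussianReal (hg.differentiable one_ne_zero) hg2 hg'2
  refine ⟨chernoff hf (memLp_two_of_integrable_sq hf.continuous.measurable hf2)
    (memLp_two_of_integrable_sq (measurable_deriv f) hf'2), ?_⟩
  set g := fun z => σ (√τ * z)
  have hg : ContDiff ℝ 1 g := hσ.comp (contDiff_const.mul contDiff_id)
  have hg' : deriv g = fun z => √τ * deriv σ (√τ * z) := funext fun _ => deriv_comp_mul_left _ _ _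
  have hg2 : MemLp g 2 (gaussianReal 0 1) := memLp_two_of_integrable_sq hg.continuous.measurable hσ2
  have hσ'2' : MemLp (fun z => deriv σ (√τ * z)) 2 (gaussianReal 0 1) :=
    memLp_two_of_integrable_sq ((measurable_deriv σ).comp (measurable_const_mul _)) hσ'2
  have hg'2 : MemLp (deriv g) 2 (gaussianReal 0 1) := hg' ▸ hσ'2'.const_mul _
  have hbound := chernoff hg hg2 hg'2
  rw [variance_eq_sub hg2, hg', integral_const_mul, mul_pow] at hbound
  have hτ : τ ≤ √τ ^ 2 := Real.sq_sqrt' ▸ le_max_left τ 0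
  have hτ_mul := mul_le_mul_of_nonneg_right hτ (sq_nonneg (∫ z, deriv σ (√τ * z) ∂gaussianReal 0 1))
  simp only [Pi.pow_apply] at hbound
  linarith

/-- Gaussian (Chernoff) lower variance bound `Var(f(Z)) ≥ (E[f'(Z)])²` for `Z ~ N(0,1)`,
and in particular nonnegativity of the coefficient
`d₀ = E[σ(√τ Z)²] − (E[σ(√τ Z)])² − τ(E[σ'(√τ Z)])²`. -/
theorem gaussian_variance_lower_bound (f : ℝ → ℝ) (hf : ContDiff ℝ 1 f)
    (hf2 : Integrable (fun z => (f z) ^ 2) (gaussianReal 0 1))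
    (hf'2 : Integrable (fun z => (deriv f z) ^ 2) (gaussianReal 0 1))
    (σ : ℝ → ℝ) (hσ : ContDiff ℝ 1 σ) (τ : ℝ) (hτ : 0 < τ)
    (hσ2 : Integrable (fun z => (σ (Real.sqrt τ * z)) ^ 2) (gaussianReal 0 1))
    (hσ'2 : Integrable (fun z => (deriv σ (Real.sqrt τ * z)) ^ 2) (gaussianReal 0 1)) :
    variance f (gaussianReal 0 1) ≥ (∫ z, deriv f z ∂(gaussianReal 0 1)) ^ 2 ∧
    0 ≤ (∫ z, (σ (Real.sqrt τ * z)) ^ 2 ∂(gaussianReal 0 1))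
        - (∫ z, σ (Real.sqrt τ * z) ∂(gaussianReal 0 1)) ^ 2
        - τ * (∫ z, deriv σ (Real.sqrt τ * z) ∂(gaussianReal 0 1)) ^ 2 :=
  gaussian_variance_lower_bound_general f hf hf2 hf'2 σ hσ τ hσ2 hσ'2
end

section
/- Let Z be a standard Gaussian random variable and f : ℝ → ℝ twice continuously differentiable with E[f(Z)²], E[f'(Z)²], E[f''(Z)²] all finite. Then Var(f(Z)) ≥ (E[f'(Z)])² + (1/2)(E[f''(Z)])². -/
/-!
Gaussian integration by parts (Stein's identity `E[(Z - μ) g(Z)] = v E[g'(Z)]` for `Z ~ N(μ, v)`)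
gives `Cov(f(Z), Z) = E[f'(Z)]` and, applied twice, `Cov(f(Z), Z²) = E[f''(Z)]`. As `Z` and `Z²`
are uncorrelated with variances `1` and `2`, Bessel's inequality for this orthogonal pair gives
`Var(f(Z)) ≥ E[f'(Z)]² / 1 + E[f''(Z)]² / 2`.
-/

open MeasureTheory ProbabilityTheory Real
open scoped NNReal

namespace ProbabilityTheory

theorem covariance_sq_div_add_covariance_sq_div_le_variance {Ω : Type*} {mΩ : MeasurableSpace Ω}
    {μ : Measure Ω} [IsFiniteMeasure μ] {X Y W : Ω → ℝ}
    (hX : MemLp X 2 μ) (hY : MemLp Y 2 μ) (hW : MemLp W 2 μ) (hYW : cov[Y, W; μ] = 0) :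
    cov[X, Y; μ] ^ 2 / Var[Y; μ] + cov[X, W; μ] ^ 2 / Var[W; μ] ≤ Var[X; μ] := by
  -- Subtract the optimal multiples `c / V`; when `V = 0` the junk value `c / 0 = 0` still works.
  have hopt : ∀ c V : ℝ, (c / V) ^ 2 * V = c ^ 2 / V ∧ c / V * c = c ^ 2 / V := fun c V ↦ by
    rcases eq_or_ne V 0 with rfl | hV
    · simp
    · constructor <;> field_simp
  set a := cov[X, Y; μ] / Var[Y; μ]
  set b := cov[X, W; μ] / Var[W; μ]
  have hexpand : Var[X - (a • Y + b • W); μ]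
      = Var[X; μ] - 2 * (a * cov[X, Y; μ] + b * cov[X, W; μ])
        + (a ^ 2 * Var[Y; μ] + b ^ 2 * Var[W; μ]) := by
    rw [variance_sub hX ((hY.const_smul a).add (hW.const_smul b)),
      variance_add (hY.const_smul a) (hW.const_smul b),
      covariance_add_right hX (hY.const_smul a) (hW.const_smul b), covariance_smul_right,
      covariance_smul_right, covariance_smul_left, covariance_smul_right, hYW, variance_smul,
      variance_smul]
    ring
  have hnonneg := variance_nonneg (X - (a • Y + b • W)) μ
  rw [hexpand, (hopt _ _).1, (hopt _ _).1, (hopt _ _).2, (hopt _ _).2] at hnonneg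
  linarith

lemma hasDerivAt_gaussianPDFReal (μ : ℝ) (v : ℝ≥0) (x : ℝ) :
    HasDerivAt (gaussianPDFReal μ v) (-((x - μ) / v) * gaussianPDFReal μ v x) x := by
  have hsq : HasDerivAt (fun y ↦ (y - μ) ^ 2) (2 * (x - μ)) x := by
    simpa using ((hasDerivAt_id x).sub_const μ).fun_pow 2
  have hexponent : HasDerivAt (fun y ↦ -(y - μ) ^ 2 / (2 * v)) (-((x - μ) / v)) x := by
    refine (hsq.neg.div_const (2 * (v : ℝ))).congr_deriv ?_
    rcases eq_or_ne (v : ℝ) 0 with hv | hv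
    · simp [hv]
    · field_simp
  refine (hexponent.exp.const_mul (√(2 * π * v))⁻¹).congr_deriv ?_
  rw [gaussianPDFReal_def]
  ring

variable {μ : ℝ} {v : ℝ≥0}

lemma integrable_gaussianReal_iff {g : ℝ → ℝ} (hv : v ≠ 0) :
    Integrable g (gaussianReal μ v) ↔ Integrable (fun x ↦ gaussianPDFReal μ v x * g x) := by
  rw [gaussianReal_of_var_ne_zero μ hv, gaussianPDF_def,
    integrable_withDensity_iff_integrable_smul' (by fun_prop) (by simp)]
  simp_rw [ENNReal.toReal_ofReal (gaussianPDFReal_nonneg μ v _), smul_eq_mul]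

theorem integral_sub_mul_gaussianReal {g : ℝ → ℝ} (hg : Differentiable ℝ g)
    (hg_int : Integrable g (gaussianReal μ v))
    (hg'_int : Integrable (deriv g) (gaussianReal μ v))
    (hxg_int : Integrable (fun x ↦ (x - μ) * g x) (gaussianReal μ v)) :
    ∫ x, (x - μ) * g x ∂gaussianReal μ v = v * ∫ x, deriv g x ∂gaussianReal μ v := by
  rcases eq_or_ne v 0 with rfl | hv
  · simp [gaussianReal_zero_var]
  have hv₀ : (v : ℝ) ≠ 0 := by exact_mod_cast hv
  rw [integrable_gaussianReal_iff hv] at hg_int hg'_int hxg_int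
  simp_rw [integral_gaussianReal_eq_integral_smul hv, smul_eq_mul]
  have hibp := integral_mul_deriv_eq_deriv_mul_of_integrable
    (fun x _ ↦ (hg x).hasDerivAt) (fun x _ ↦ hasDerivAt_gaussianPDFReal μ v x)
    ((hxg_int.const_mul (-(v : ℝ)⁻¹)).congr
      (ae_of_all _ fun x ↦ by simp only [Pi.mul_apply]; ring))
    (hg'_int.congr (ae_of_all _ fun x ↦ by simp only [Pi.mul_apply]; ring))
    (hg_int.congr (ae_of_all _ fun x ↦ by simp only [Pi.mul_apply]; ring))
  calc ∫ x, gaussianPDFReal μ v x * ((x - μ) * g x)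
      = ∫ x, -(v : ℝ) * (g x * (-((x - μ) / v) * gaussianPDFReal μ v x)) := by
        congr 1 with x; field_simp
    _ = v * ∫ x, gaussianPDFReal μ v x * deriv g x := by
        simp_rw [integral_const_mul, hibp, mul_comm (deriv g _)]; ring

lemma integrable_pow_gaussianReal (n : ℕ) : Integrable (fun x ↦ x ^ n) (gaussianReal μ v) :=
  ((memLp_id_gaussianReal n).integrable_norm_pow').mono' (by fun_prop)
    (ae_of_all _ fun x ↦ (norm_pow x n).le)

lemma memLp_pow_gaussianReal (n : ℕ) : MemLp (fun x ↦ x ^ n) 2 (gaussianReal μ v) := by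
  refine (memLp_two_iff_integrable_sq (by fun_prop)).mpr ?_
  simpa only [← pow_mul] using integrable_pow_gaussianReal (n * 2)

lemma integral_pow_add_two_gaussianReal (n : ℕ) :
    ∫ x, x ^ (n + 2) ∂gaussianReal 0 v = (n + 1) * v * ∫ x, x ^ n ∂gaussianReal 0 v := by
  have hderiv : deriv (fun x : ℝ ↦ x ^ (n + 1)) = fun x ↦ (n + 1 : ℝ) * x ^ n := by
    ext x; simp
  have h := integral_sub_mul_gaussianReal (μ := 0) (v := v) (differentiable_pow (n + 1))
    (integrable_pow_gaussianReal _)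
    (by simpa only [hderiv] using (integrable_pow_gaussianReal n).const_mul _)
    (by simpa only [sub_zero, ← pow_succ'] using integrable_pow_gaussianReal (n + 2))
  simp only [sub_zero, ← pow_succ', hderiv, integral_const_mul] at h
  rw [h]; ring

lemma integral_sq_gaussianReal : ∫ x, x ^ 2 ∂gaussianReal 0 v = v := by
  simpa using integral_pow_add_two_gaussianReal (v := v) 0

lemma integral_pow_three_gaussianReal : ∫ x, x ^ 3 ∂gaussianReal 0 v = 0 := by
  simpa [integral_id_gaussianReal] using integral_pow_add_two_gaussianReal (v := v) 1

lemma integral_pow_four_gaussianReal : ∫ x, x ^ 4 ∂gaussianReal 0 v = 3 * v ^ 2 := by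
  rw [integral_pow_add_two_gaussianReal 2, integral_sq_gaussianReal]
  push_cast; ring

lemma covariance_id_pow_two_gaussianReal :
    cov[fun x ↦ x, fun x ↦ x ^ 2; gaussianReal 0 v] = 0 := by
  rw [covariance_eq_sub (X := fun x ↦ x) (memLp_id_gaussianReal 2) (memLp_pow_gaussianReal 2)]
  simp [← pow_succ', integral_pow_three_gaussianReal, integral_id_gaussianReal]

lemma variance_pow_two_gaussianReal : Var[fun x ↦ x ^ 2; gaussianReal 0 v] = 2 * v ^ 2 := by
  rw [variance_eq_sub (memLp_pow_gaussianReal 2)]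
  simp only [Pi.pow_apply, ← pow_mul]
  rw [integral_pow_four_gaussianReal, integral_sq_gaussianReal]
  ring

theorem covariance_id_gaussianReal {g : ℝ → ℝ} (hg : Differentiable ℝ g)
    (hg_memLp : MemLp g 2 (gaussianReal μ v)) (hg' : Integrable (deriv g) (gaussianReal μ v)) :
    cov[g, fun x ↦ x; gaussianReal μ v] = v * ∫ x, deriv g x ∂gaussianReal μ v := by
  have hx : MemLp (fun x ↦ x - μ) 2 (gaussianReal μ v) :=
    (memLp_id_gaussianReal 2).sub (memLp_const μ)
  have hderiv : deriv (fun x ↦ g x - ∫ y, g y ∂gaussianReal μ v) = deriv g :=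
    funext fun x ↦ deriv_sub_const _
  rw [covariance, integral_id_gaussianReal, ← hderiv]
  refine (integral_congr_ae (ae_of_all _ fun x ↦ mul_comm _ _)).trans ?_
  exact integral_sub_mul_gaussianReal (hg.sub_const _)
    ((hg_memLp.integrable one_le_two).sub (integrable_const _)) (by rwa [hderiv])
    (hx.integrable_mul (hg_memLp.sub (memLp_const _)))

theorem covariance_pow_two_gaussianReal {g : ℝ → ℝ} (hg : Differentiable ℝ g)
    (hg' : Differentiable ℝ (deriv g)) (hg_memLp : MemLp g 2 (gaussianReal 0 v))
    (hg'_memLp : MemLp (deriv g) 2 (gaussianReal 0 v))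
    (hg'' : Integrable (deriv (deriv g)) (gaussianReal 0 v)) :
    cov[g, fun x ↦ x ^ 2; gaussianReal 0 v] =
      v ^ 2 * ∫ x, deriv (deriv g) x ∂gaussianReal 0 v := by
  have hx : MemLp (fun x ↦ x) 2 (gaussianReal 0 v) := memLp_id_gaussianReal 2
  have hderiv : deriv (fun x ↦ x * g x) = fun x ↦ g x + x * deriv g x := by
    ext x; simp [hg x, mul_comm]
  have hxg : Integrable (fun x ↦ x * g x) (gaussianReal 0 v) := hx.integrable_mul hg_memLp
  have hxg' : Integrable (fun x ↦ x * deriv g x) (gaussianReal 0 v) :=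
    hx.integrable_mul hg'_memLp
  have hx2g : Integrable (fun x ↦ x ^ 2 * g x) (gaussianReal 0 v) :=
    (memLp_pow_gaussianReal 2).integrable_mul hg_memLp
  have h₁ := integral_sub_mul_gaussianReal hg' (hg'_memLp.integrable one_le_two) hg''
    (by simpa using hxg')
  have h₂ := integral_sub_mul_gaussianReal (g := fun x ↦ x * g x) (differentiable_id.mul hg)
    (by simpa using hxg)
    (by rw [hderiv]; exact (hg_memLp.integrable one_le_two).add hxg')
    (by simpa [← mul_assoc, ← sq] using hx2g)
  simp only [sub_zero] at h₁ h₂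
  rw [hderiv, integral_add (hg_memLp.integrable one_le_two) hxg', h₁] at h₂
  rw [covariance_eq_sub hg_memLp (memLp_pow_gaussianReal 2), integral_sq_gaussianReal]
  simp only [Pi.mul_apply]
  rw [integral_congr_ae (g := fun x ↦ x * (x * g x)) (ae_of_all _ fun x ↦ by ring), h₂]
  ring

end ProbabilityTheory

/-- Two-term Hermite lower bound on the Gaussian variance:
`Var(f(Z)) ≥ (E[f'(Z)])² + (1/2)(E[f''(Z)])²` for `Z ~ N(0,1)`. -/
theorem gaussian_variance_two_term_lower_bound (f : ℝ → ℝ) (hf : ContDiff ℝ 2 f)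
    (hf2 : Integrable (fun z => (f z) ^ 2) (gaussianReal 0 1))
    (hf'2 : Integrable (fun z => (deriv f z) ^ 2) (gaussianReal 0 1))
    (hf''2 : Integrable (fun z => (deriv (deriv f) z) ^ 2) (gaussianReal 0 1)) :
    variance f (gaussianReal 0 1) ≥ (∫ z, deriv f z ∂(gaussianReal 0 1)) ^ 2
      + (1 / 2) * (∫ z, deriv (deriv f) z ∂(gaussianReal 0 1)) ^ 2 := by
  have hf' : ContDiff ℝ 1 (deriv f) := hf.deriv'
  have hL2 {g : ℝ → ℝ} (hg : Continuous g)
      (hg2 : Integrable (fun z => g z ^ 2) (gaussianReal 0 1)) : MemLp g 2 (gaussianReal 0 1) :=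
    (memLp_two_iff_integrable_sq hg.aestronglyMeasurable).mpr hg2
  have hf_L2 := hL2 hf.continuous hf2
  have hf'_L2 := hL2 hf'.continuous hf'2
  have hf''_L2 := hL2 (hf'.continuous_deriv le_rfl) hf''2
  have hbessel := covariance_sq_div_add_covariance_sq_div_le_variance (Y := fun x ↦ x) hf_L2
    (memLp_id_gaussianReal 2) (memLp_pow_gaussianReal 2) covariance_id_pow_two_gaussianReal
  rw [covariance_id_gaussianReal (hf.differentiable two_ne_zero) hf_L2
      (hf'_L2.integrable one_le_two),
    covariance_pow_two_gaussianReal (hf.differentiable two_ne_zero)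
      (hf'.differentiable one_ne_zero) hf_L2 hf'_L2 (hf''_L2.integrable one_le_two),
    variance_fun_id_gaussianReal, variance_pow_two_gaussianReal] at hbessel
  norm_num at hbessel
  linarith
end
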